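/- arXiv:2509.18534 — 5 statements merged into one kernel-verified Lean document; each statement's English description precedes it below -/
import Mathlib

section
/- Two successive left outer joins of a shared relation with independent non-shared relations do not interfere: for S : Set ρ, T₁ : Set (κ × β₁) and T₂ : Set (κ × β₂), and with the key of an extended row (s, o) : ρ × Option β₁ defined as key s, one has ((s, o₁), o₂) ∈ OJ (OJ S T₁) T₂ if and only if (s, o₁) ∈ OJ S T₁ and (s, o₂) ∈ OJ S T₂. -/
/-- Left outer join of `X : Set ρ` with `T : Set (κ × β)`, joining on `key`. -/
def OJ {ρ κ β : Type*} (key : ρ → κ) (X : Set ρ) (T : Set (κ × β)) :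
    Set (ρ × Option β) :=
  {p : ρ × Option β |
    (∃ x b, p = (x, some b) ∧ x ∈ X ∧ (key x, b) ∈ T) ∨
    (∃ x, p = (x, (none : Option β)) ∧ x ∈ X ∧ ∀ b, (key x, b) ∉ T)}

theorem mem_OJ_iff {ρ κ β : Type*} {key : ρ → κ} {X : Set ρ} {T : Set (κ × β)} {x : ρ}
    {o : Option β} :
    (x, o) ∈ OJ key X T ↔ x ∈ X ∧ o.elim (∀ b, (key x, b) ∉ T) (fun b => (key x, b) ∈ T) := by
  cases o <;> simp [OJ]

/-- Two successive left outer joins of a shared relation with independent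
non-shared relations do not interfere. -/
theorem oj_oj_iff {ρ κ β₁ β₂ : Type*} (key : ρ → κ)
    (S : Set ρ) (T₁ : Set (κ × β₁)) (T₂ : Set (κ × β₂))
    (s : ρ) (o₁ : Option β₁) (o₂ : Option β₂) :
    ((s, o₁), o₂) ∈ OJ (fun p : ρ × Option β₁ => key p.1) (OJ key S T₁) T₂ ↔
      (s, o₁) ∈ OJ key S T₁ ∧ (s, o₂) ∈ OJ key S T₂ := by
  rw [mem_OJ_iff, mem_OJ_iff (x := s) (o := o₂)]
  exact and_congr_right fun h => (and_iff_right (mem_OJ_iff.mp h).1).symm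
end

section
/- (Binary case of the paper's Theorem 1: the merged outer-join query retrieves both original inner-join queries without loss or error.) For S : Set ρ, T₁ : Set (κ × β₁) and T₂ : Set (κ × β₂), with the key of an extended row (s, o) defined as key s, let M := OJ (OJ S T₁) T₂. Then {(s, b) : ρ × β₁ | ∃ o₂, ((s, some b), o₂) ∈ M} = {(s, b) | s ∈ S ∧ (key s, b) ∈ T₁}, and {(s, c) : ρ × β₂ | ∃ o₁, ((s, o₁), some c) ∈ M} = {(s, c) | s ∈ S ∧ (key s, c) ∈ T₂}. -/
/-
The rows of `OJ X T` carrying a payload `some b` are exactly the inner join of `X` with `T`,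
and every row of `X` survives the outer join (padded with `none` when it has no partner).
So forgetting the other slot of the merged query loses no row of `S`, and a `some` entry in
either slot is an inner-join row.
-/

section OuterJoin

variable {ρ κ β : Type*} (key : ρ → κ) (X : Set ρ) (T : Set (κ × β))

theorem mem_OJ_some {x : ρ} {b : β} :
    (x, some b) ∈ OJ key X T ↔ x ∈ X ∧ (key x, b) ∈ T := by
  simp [OJ]

theorem mem_OJ_none {x : ρ} :
    (x, none) ∈ OJ key X T ↔ x ∈ X ∧ ∀ b, (key x, b) ∉ T := by
  simp [OJ]

theorem exists_mem_OJ_iff {x : ρ} : (∃ o, (x, o) ∈ OJ key X T) ↔ x ∈ X := by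
  constructor
  · rintro ⟨o | b, h⟩
    · exact ((mem_OJ_none key X T).1 h).1
    · exact ((mem_OJ_some key X T).1 h).1
  · intro hx
    by_cases hmatch : ∃ b, (key x, b) ∈ T
    · obtain ⟨b, hb⟩ := hmatch
      exact ⟨some b, (mem_OJ_some key X T).2 ⟨hx, hb⟩⟩
    · rw [not_exists] at hmatch
      exact ⟨none, (mem_OJ_none key X T).2 ⟨hx, hmatch⟩⟩

end OuterJoin

/-- Binary case of the paper's Theorem 1: the merged outer-join query
`M := OJ (OJ S T₁) T₂` retrieves both original inner-join queries without loss
or error. -/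
theorem merged_oj_recovers_both_inner_joins {ρ κ β₁ β₂ : Type*} (key : ρ → κ)
    (S : Set ρ) (T₁ : Set (κ × β₁)) (T₂ : Set (κ × β₂)) :
    ({p : ρ × β₁ | ∃ o₂ : Option β₂,
        ((p.1, some p.2), o₂) ∈
          OJ (fun q : ρ × Option β₁ => key q.1) (OJ key S T₁) T₂} =
      {p : ρ × β₁ | p.1 ∈ S ∧ (key p.1, p.2) ∈ T₁}) ∧
    ({p : ρ × β₂ | ∃ o₁ : Option β₁,
        ((p.1, o₁), some p.2) ∈
          OJ (fun q : ρ × Option β₁ => key q.1) (OJ key S T₁) T₂} =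
      {p : ρ × β₂ | p.1 ∈ S ∧ (key p.1, p.2) ∈ T₂}) := by
  constructor
  · ext ⟨s, b⟩
    simp only [Set.mem_ofPred_eq, exists_mem_OJ_iff, mem_OJ_some]
  · ext ⟨s, c⟩
    simp only [Set.mem_ofPred_eq, mem_OJ_some, exists_and_right, exists_mem_OJ_iff]
end

section
/- (Per-subquery recovery from the merged query, general form.) Fix S : Set ρ, key : ρ → κ, an index type ι, payload types β : ι → Type, relations T : (i : ι) → Set (κ × β i), and let M be the merged query. Then for every index i, the set {(s, b) : ρ × β i | ∃ f, (s, f) ∈ M ∧ f i = some b} equals the inner join {(s, b) | s ∈ S ∧ (key s, b) ∈ T i}: the merged query retrieves each original single join without loss or error. -/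
/-- The merged (outer-join) query: the shared subquery `S` outer-joined with
every non-shared subquery `T i`, all joins on the shared key. -/
def Merged {ρ κ : Type*} {ι : Type*} {β : ι → Type*} (key : ρ → κ) (S : Set ρ)
    (T : (i : ι) → Set (κ × β i)) : Set (ρ × ((i : ι) → Option (β i))) :=
  {p : ρ × ((i : ι) → Option (β i)) | p.1 ∈ S ∧ ∀ i,
    (p.2 i = none ∧ ∀ b, (key p.1, b) ∉ T i) ∨
    (∃ b, p.2 i = some b ∧ (key p.1, b) ∈ T i)}

section OuterJoin

variable {ρ κ ι : Type*} {β : ι → Type*} (key : ρ → κ) (T : (i : ι) → Set (κ × β i))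

def IsOuterJoinEntry (s : ρ) (i : ι) (o : Option (β i)) : Prop :=
  (o = none ∧ ∀ b, (key s, b) ∉ T i) ∨ ∃ b, o = some b ∧ (key s, b) ∈ T i

variable {key T}

theorem Merged.isOuterJoinEntry {S : Set ρ} {s : ρ} {f : (i : ι) → Option (β i)}
    (hf : (s, f) ∈ Merged key S T) (i : ι) : IsOuterJoinEntry key T s i (f i) :=
  hf.2 i

theorem isOuterJoinEntry_some_iff {s : ρ} {i : ι} {b : β i} :
    IsOuterJoinEntry key T s i (some b) ↔ (key s, b) ∈ T i := by
  simp [IsOuterJoinEntry]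

variable (key T)

theorem exists_isOuterJoinEntry (s : ρ) (i : ι) : ∃ o, IsOuterJoinEntry key T s i o := by
  by_cases h : ∃ b, (key s, b) ∈ T i
  · obtain ⟨b, hb⟩ := h
    exact ⟨some b, isOuterJoinEntry_some_iff.2 hb⟩
  · exact ⟨none, Or.inl ⟨rfl, fun b hb => h ⟨b, hb⟩⟩⟩

variable {key T}

theorem Merged.mem_of_apply_eq_some {S : Set ρ} {s : ρ} {f : (i : ι) → Option (β i)}
    {i : ι} {b : β i} (hf : (s, f) ∈ Merged key S T) (hb : f i = some b) :
    (key s, b) ∈ T i :=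
  isOuterJoinEntry_some_iff.1 (hb ▸ Merged.isOuterJoinEntry hf i)

/-- Columns are independent: fill every other column with any admissible entry. -/
theorem Merged.exists_apply_eq_some {S : Set ρ} {s : ρ} {i : ι} {b : β i} (hs : s ∈ S)
    (hb : (key s, b) ∈ T i) : ∃ f, (s, f) ∈ Merged key S T ∧ f i = some b := by
  classical
  choose g hg using exists_isOuterJoinEntry key T s
  refine ⟨Function.update g i (some b), ⟨hs, ?_⟩, Function.update_self i _ g⟩
  exact Function.forall_update_iff g (p := IsOuterJoinEntry key T s)
    |>.2 ⟨isOuterJoinEntry_some_iff.2 hb, fun j _ => hg j⟩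

end OuterJoin

/-- Per-subquery recovery from the merged query: the merged query retrieves
each original single join without loss or error. -/
theorem merged_recovers_each_join {ρ κ : Type*} {ι : Type*} {β : ι → Type*}
    (key : ρ → κ) (S : Set ρ) (T : (i : ι) → Set (κ × β i)) (i : ι) :
    {q : ρ × β i | ∃ f, (q.1, f) ∈ Merged key S T ∧ f i = some q.2} =
      {q : ρ × β i | q.1 ∈ S ∧ (key q.1, q.2) ∈ T i} := by
  ext ⟨s, b⟩
  constructor
  · rintro ⟨f, hf, hb⟩
    exact ⟨hf.1, Merged.mem_of_apply_eq_some hf hb⟩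
  · rintro ⟨hs, hb⟩
    exact Merged.exists_apply_eq_some hs hb
end

section
/- (Completeness: the merged query does not filter the shared subquery.) Fix S : Set ρ, key : ρ → κ, an index type ι, payload types β : ι → Type, relations T : (i : ι) → Set (κ × β i), and let M be the merged query. Then the set {s : ρ | ∃ f, (s, f) ∈ M} equals S: every row of the shared subquery result appears in the merged query, and every row of the merged query extends a row of the shared subquery result. -/
theorem exists_outerJoin_entry {κ β : Type*} (k : κ) (R : Set (κ × β)) :
    ∃ o : Option β, (o = none ∧ ∀ b, (k, b) ∉ R) ∨ (∃ b, o = some b ∧ (k, b) ∈ R) := by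
  by_cases h : ∃ b, (k, b) ∈ R
  · obtain ⟨b, hb⟩ := h
    exact ⟨some b, .inr ⟨b, rfl, hb⟩⟩
  · exact ⟨none, .inl ⟨rfl, fun b hb => h ⟨b, hb⟩⟩⟩

/-- Completeness: the merged query does not filter the shared subquery. -/
theorem merged_projection_eq_shared {ρ κ : Type*} {ι : Type*} {β : ι → Type*}
    (key : ρ → κ) (S : Set ρ) (T : (i : ι) → Set (κ × β i)) :
    {s : ρ | ∃ f, (s, f) ∈ Merged key S T} = S := by
  ext s
  refine ⟨fun ⟨_, hs, _⟩ => hs, fun hs => ?_⟩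
  choose f hf using fun i => exists_outerJoin_entry (key s) (T i)
  exact ⟨f, hs, hf⟩
end

section
/- (Restriction/reordering property of the merged query.) Fix S : Set ρ, key : ρ → κ, an index type ι, payload types β : ι → Type, relations T : (i : ι) → Set (κ × β i), and let M be the merged query over the full index set ι. For any subset J : Set ι, let M_J denote the merged query built from the restricted family (fun (j : J) => T j) with payload types (fun (j : J) => β j). Then {(s, fun (j : J) => f j) | (s, f) ∈ M} = M_J: restricting the merged query to any subset of non-shared subqueries yields exactly the merged query over that subset (this expresses that the outer joins with non-shared subqueries can be reordered and dropped freely). -/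
open Set

theorem Set.domRestrict_image_univ_pi {ι : Type*} {α : ι → Type*} {t : ∀ i, Set (α i)}
    (ht : ∀ i, (t i).Nonempty) (J : Set ι) :
    J.domRestrict '' univ.pi t = univ.pi fun j : J => t j := by
  classical
  refine Subset.antisymm ?_ fun g hg => ?_
  · rintro _ ⟨f, hf, rfl⟩ j -
    exact hf j trivial
  · choose x hx using ht
    refine ⟨fun i => if h : i ∈ J then g ⟨i, h⟩ else x i, fun i _ => ?_,
      funext fun j => dif_pos j.2⟩
    dsimp only
    split_ifs with h
    exacts [hg ⟨i, h⟩ trivial, hx i]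

def outerMatches {κ β : Type*} (R : Set (κ × β)) (k : κ) : Set (Option β) :=
  {o | (o = none ∧ ∀ b, (k, b) ∉ R) ∨ ∃ b, o = some b ∧ (k, b) ∈ R}

theorem outerMatches_nonempty {κ β : Type*} (R : Set (κ × β)) (k : κ) :
    (outerMatches R k).Nonempty := by
  by_cases h : ∃ b, (k, b) ∈ R
  · obtain ⟨b, hb⟩ := h
    exact ⟨some b, .inr ⟨b, rfl, hb⟩⟩
  · exact ⟨none, .inl ⟨rfl, not_exists.mp h⟩⟩

theorem mem_merged_iff {ρ κ ι : Type*} {β : ι → Type*} {key : ρ → κ} {S : Set ρ}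
    {T : (i : ι) → Set (κ × β i)} {p : ρ × ((i : ι) → Option (β i))} :
    p ∈ Merged key S T ↔ p.1 ∈ S ∧ p.2 ∈ univ.pi fun i => outerMatches (T i) (key p.1) := by
  simp only [mem_univ_pi]
  rfl

/-- Restriction/reordering property of the merged query: restricting the merged
query to any subset of non-shared subqueries yields exactly the merged query
over that subset. -/
theorem merged_restrict {ρ κ : Type*} {ι : Type*} {β : ι → Type*}
    (key : ρ → κ) (S : Set ρ) (T : (i : ι) → Set (κ × β i)) (J : Set ι) :
    (fun p : ρ × ((i : ι) → Option (β i)) =>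
        (p.1, fun j : J => p.2 j)) '' Merged key S T =
      Merged key S (fun j : J => T j) := by
  have hfiber (s : ρ) := J.domRestrict_image_univ_pi fun i => outerMatches_nonempty (T i) (key s)
  ext ⟨s, g⟩
  simp only [mem_image, Prod.exists, Prod.mk.injEq, mem_merged_iff]
  rw [← hfiber s]
  constructor
  · rintro ⟨s, f, ⟨hs, hf⟩, rfl, rfl⟩
    exact ⟨hs, f, hf, rfl⟩
  · rintro ⟨hs, f, hf, rfl⟩
    exact ⟨s, f, ⟨hs, hf⟩, rfl, rfl⟩
end
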